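/- arXiv:1309.0637 — 2 statements merged into one kernel-verified Lean document; each statement's English description precedes it below -/
import Mathlib

section
/- The vector space C = HH_0(𝒜, ω^∨⊗ω) carries a well-defined coassociative counital k-coalgebra structure in which the counit ε : C → k sends [φ⊗v] to φ(v), and the comultiplication Δ : C → C ⊗_k C sends [φ⊗v] (with φ ∈ ω(X)^∨, v ∈ ω(X)) to Σ_i [φ⊗e_i] ⊗ [e_i^∨⊗v], where (e_i) is any basis of ω(X) with dual basis (e_i^∨). In particular ε and Δ are well defined on the quotient, Δ is independent of the choices of bases, (Δ⊗id)∘Δ = (id⊗Δ)∘Δ, and (ε⊗id)∘Δ = id = (id⊗ε)∘Δ. -/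
/-!
Both maps are defined summand by summand on `⨁_X ω(X)^∨ ⊗ ω(X)`: `ε` is evaluation, and `Δ`
inserts the coevaluation `Σᵢ eᵢ ⊗ eᵢ^∨` between `φ` and `v`. For a linear map `f : V → W` and
bases `(bᵢ)` of `V`, `(cⱼ)` of `W`, the elements `Σᵢ f(bᵢ) ⊗ bᵢ^∨` and `Σⱼ cⱼ ⊗ (cⱼ^∨ ∘ f)` of
`W ⊗ V^∨` agree (both correspond to `f`). Applied to `f = ω(g)` this says that `Δ` respects the
relations `[φ∘ω(g) ⊗ v] = [φ ⊗ ω(g)(v)]`, and applied to `f = id` that `Δ` does not depend on the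
basis. Coassociativity is then a reindexing of a double sum, and the counit laws are the
expansions `φ = Σᵢ φ(eᵢ) eᵢ^∨` and `v = Σᵢ eᵢ^∨(v) eᵢ`.
-/

open CategoryTheory TensorProduct

noncomputable section

namespace Tannaka

variable (k : Type) [Field k] (A : Type) [SmallCategory A] [DecidableEq A]
  [Preadditive A] [CategoryTheory.Linear k A]
variable (ω : A ⥤ ModuleCat k) [ω.Additive] [Functor.Linear k ω]

/-- The direct sum `⨁_{X ∈ Ob 𝒜} ω(X)^∨ ⊗ ω(X)`. -/
abbrev HH0pre : Type := DirectSum A (fun X => Module.Dual k (ω.obj X) ⊗[k] ω.obj X)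

instance : AddCommGroup (HH0pre k A ω) :=
  @DFinsupp.addCommGroup A (fun X => Module.Dual k (ω.obj X) ⊗[k] ω.obj X) (fun _ => inferInstance)

/-- The subspace spanned by the elements `(φ∘ω(f))⊗v − φ⊗ω(f)(v)` for
`f : X ⟶ Y`, `φ ∈ ω(Y)^∨`, `v ∈ ω(X)`. -/
def HH0rel : Submodule k (HH0pre k A ω) :=
  Submodule.span k
    { z | ∃ (X Y : A) (f : X ⟶ Y) (φ : Module.Dual k (ω.obj Y)) (v : ω.obj X),
        z = DirectSum.lof k A (fun X => Module.Dual k (ω.obj X) ⊗[k] ω.obj X) X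
              ((φ ∘ₗ (ω.map f).hom) ⊗ₜ[k] v)
          - DirectSum.lof k A (fun X => Module.Dual k (ω.obj X) ⊗[k] ω.obj X) Y
              (φ ⊗ₜ[k] (ω.map f v)) }

/-- `C = HH₀(𝒜, ω^∨ ⊗ ω)`. -/
abbrev HH0 : Type := HH0pre k A ω ⧸ HH0rel k A ω

/-- The class `[φ ⊗ v]` of `φ ⊗ v`, `φ ∈ ω(X)^∨`, `v ∈ ω(X)`, in `HH₀`. -/
def cls (X : A) (φ : Module.Dual k (ω.obj X)) (v : ω.obj X) : HH0 k A ω :=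
  Submodule.Quotient.mk
    (DirectSum.lof k A (fun X => Module.Dual k (ω.obj X) ⊗[k] ω.obj X) X (φ ⊗ₜ[k] v))

end Tannaka

theorem Module.Basis.sum_map_tmul_coord {R V W ι κ : Type*} [CommSemiring R]
    [AddCommMonoid V] [Module R V] [AddCommMonoid W] [Module R W] [Fintype ι] [Fintype κ]
    (b : Module.Basis ι R V) (c : Module.Basis κ R W) (f : V →ₗ[R] W) :
    ∑ i, f (b i) ⊗ₜ[R] b.coord i = ∑ j, c j ⊗ₜ[R] (c.coord j ∘ₗ f) :=
  calc ∑ i, f (b i) ⊗ₜ[R] b.coord i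
      = ∑ i, ∑ j, c.coord j (f (b i)) • (c j ⊗ₜ[R] b.coord i) := by
        simp_rw [smul_tmul', ← sum_tmul, c.coord_apply, c.sum_repr]
    _ = ∑ j, ∑ i, c.coord j (f (b i)) • (c j ⊗ₜ[R] b.coord i) := Finset.sum_comm
    _ = ∑ j, c j ⊗ₜ[R] (c.coord j ∘ₗ f) := by
        simp_rw [← tmul_smul, ← tmul_sum]
        conv_rhs => enter [2, j]; rw [← b.sum_dual_apply_smul_coord (c.coord j ∘ₗ f)]
        rfl

namespace Tannaka

variable (k : Type) [Field k] (A : Type) [SmallCategory A] [DecidableEq A]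
variable (ω : A ⥤ ModuleCat k)

def clsₗ (X : A) : Module.Dual k (ω.obj X) →ₗ[k] ω.obj X →ₗ[k] HH0 k A ω :=
  (TensorProduct.mk k _ _).compr₂
    ((HH0rel k A ω).mkQ ∘ₗ DirectSum.lof k A (fun X => Module.Dual k (ω.obj X) ⊗[k] ω.obj X) X)

theorem clsₗ_apply (X : A) (φ : Module.Dual k (ω.obj X)) (v : ω.obj X) :
    clsₗ k A ω X φ v = cls k A ω X φ v := rfl

theorem cls_comp_map {X Y : A} (f : X ⟶ Y) (φ : Module.Dual k (ω.obj Y)) (v : ω.obj X) :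
    cls k A ω X (φ ∘ₗ (ω.map f).hom) v = cls k A ω Y φ (ω.map f v) :=
  (Submodule.Quotient.eq _).mpr <| Submodule.subset_span ⟨X, Y, f, φ, v, rfl⟩

theorem HH0.linearMap_ext {M : Type*} [AddCommGroup M] [Module k M] {F G : HH0 k A ω →ₗ[k] M}
    (h : ∀ (X : A) (φ : Module.Dual k (ω.obj X)) (v : ω.obj X),
      F (cls k A ω X φ v) = G (cls k A ω X φ v)) : F = G :=
  Submodule.linearMap_qext _ <| DirectSum.linearMap_ext k fun X => TensorProduct.ext' (h X)

def counit : HH0 k A ω →ₗ[k] k :=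
  (HH0rel k A ω).liftQ (DirectSum.toModule k A k fun X => contractLeft k (ω.obj X)) <|
    Submodule.span_le.mpr <| by
      rintro _ ⟨X, Y, f, φ, v, rfl⟩
      simp [DirectSum.toModule_lof]

@[simp]
theorem counit_cls (X : A) (φ : Module.Dual k (ω.obj X)) (v : ω.obj X) :
    counit k A ω (cls k A ω X φ v) = φ v := by
  change DirectSum.toModule k A k (fun X => contractLeft k (ω.obj X))
    (DirectSum.lof k A (fun X => Module.Dual k (ω.obj X) ⊗[k] ω.obj X) X (φ ⊗ₜ v)) = φ v
  rw [DirectSum.toModule_lof, contractLeft_apply]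

theorem sum_cls_tmul_cls_comp_map {X Y : A} (f : X ⟶ Y) {ι κ : Type*} [Fintype ι] [Fintype κ]
    (b : Module.Basis ι k (ω.obj X)) (c : Module.Basis κ k (ω.obj Y))
    (φ : Module.Dual k (ω.obj Y)) (v : ω.obj X) :
    ∑ i, cls k A ω X (φ ∘ₗ (ω.map f).hom) (b i) ⊗ₜ[k] cls k A ω X (b.coord i) v =
      ∑ j, cls k A ω Y φ (c j) ⊗ₜ[k] cls k A ω Y (c.coord j) (ω.map f v) := by
  simp_rw [cls_comp_map]
  conv_rhs => enter [2, j, 3]; rw [← cls_comp_map]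
  simpa only [map_sum, map_tmul, LinearMap.flip_apply, clsₗ_apply] using
    congrArg (TensorProduct.map (clsₗ k A ω Y φ) ((clsₗ k A ω X).flip v))
      (b.sum_map_tmul_coord c (ω.map f).hom)

section Comul

variable [∀ X : A, FiniteDimensional k (ω.obj X)]

def comulAt (X : A) : Module.Dual k (ω.obj X) ⊗[k] ω.obj X →ₗ[k] HH0 k A ω ⊗[k] HH0 k A ω :=
  let b := Module.finBasis k (ω.obj X)
  ∑ i, TensorProduct.map ((clsₗ k A ω X).flip (b i)) (clsₗ k A ω X (b.coord i))

theorem comulAt_tmul (X : A) {ι : Type*} [Fintype ι] (b : Module.Basis ι k (ω.obj X))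
    (φ : Module.Dual k (ω.obj X)) (v : ω.obj X) :
    comulAt k A ω X (φ ⊗ₜ v) = ∑ i, cls k A ω X φ (b i) ⊗ₜ[k] cls k A ω X (b.coord i) v := by
  let e := Module.finBasis k (ω.obj X)
  calc comulAt k A ω X (φ ⊗ₜ v)
      = ∑ i, cls k A ω X φ (e i) ⊗ₜ[k] cls k A ω X (e.coord i) v := by
        simp [comulAt, e, clsₗ_apply]
    _ = _ := by simpa using sum_cls_tmul_cls_comp_map k A ω (𝟙 X) e b φ v

def comul : HH0 k A ω →ₗ[k] HH0 k A ω ⊗[k] HH0 k A ω :=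
  (HH0rel k A ω).liftQ (DirectSum.toModule k A _ (comulAt k A ω)) <| Submodule.span_le.mpr <| by
    rintro _ ⟨X, Y, f, φ, v, rfl⟩
    simp only [SetLike.mem_coe, LinearMap.mem_ker, map_sub, DirectSum.toModule_lof, sub_eq_zero,
      comulAt_tmul k A ω _ (Module.finBasis k _)]
    exact sum_cls_tmul_cls_comp_map k A ω f _ _ φ v

theorem comul_cls (X : A) {ι : Type*} [Fintype ι] (b : Module.Basis ι k (ω.obj X))
    (φ : Module.Dual k (ω.obj X)) (v : ω.obj X) :
    comul k A ω (cls k A ω X φ v) =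
      ∑ i, cls k A ω X φ (b i) ⊗ₜ[k] cls k A ω X (b.coord i) v := by
  change DirectSum.toModule k A _ (comulAt k A ω)
    (DirectSum.lof k A (fun X => Module.Dual k (ω.obj X) ⊗[k] ω.obj X) X (φ ⊗ₜ v)) = _
  rw [DirectSum.toModule_lof, comulAt_tmul k A ω X b]

theorem comul_coassoc :
    (TensorProduct.assoc k _ _ _).toLinearMap ∘ₗ
        (TensorProduct.map (comul k A ω) LinearMap.id) ∘ₗ comul k A ω =
      (TensorProduct.map LinearMap.id (comul k A ω)) ∘ₗ comul k A ω := by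
  refine HH0.linearMap_ext k A ω fun X φ v => ?_
  let b := Module.finBasis k (ω.obj X)
  simp only [LinearMap.comp_apply, LinearEquiv.coe_coe, comul_cls k A ω X b, map_sum, map_tmul,
    LinearMap.id_apply, sum_tmul, tmul_sum, assoc_tmul]
  exact Finset.sum_comm

theorem lid_counit_comul :
    (TensorProduct.lid k (HH0 k A ω)).toLinearMap ∘ₗ
        (TensorProduct.map (counit k A ω) LinearMap.id) ∘ₗ comul k A ω = LinearMap.id := by
  refine HH0.linearMap_ext k A ω fun X φ v => ?_
  let b := Module.finBasis k (ω.obj X)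
  simp only [LinearMap.comp_apply, LinearEquiv.coe_coe, comul_cls k A ω X b, map_sum, map_tmul,
    LinearMap.id_apply, counit_cls, lid_tmul]
  simp_rw [← clsₗ_apply]
  conv_rhs => rw [← b.sum_dual_apply_smul_coord φ]
  simp only [map_sum, map_smul, LinearMap.sum_apply, LinearMap.smul_apply]

theorem rid_counit_comul :
    (TensorProduct.rid k (HH0 k A ω)).toLinearMap ∘ₗ
        (TensorProduct.map LinearMap.id (counit k A ω)) ∘ₗ comul k A ω = LinearMap.id := by
  refine HH0.linearMap_ext k A ω fun X φ v => ?_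
  let b := Module.finBasis k (ω.obj X)
  simp only [LinearMap.comp_apply, LinearEquiv.coe_coe, comul_cls k A ω X b, map_sum, map_tmul,
    LinearMap.id_apply, counit_cls, rid_tmul]
  simp_rw [← clsₗ_apply]
  conv_rhs => rw [← b.sum_repr v]
  simp only [map_sum, map_smul, b.coord_apply]

end Comul

end Tannaka

namespace Tannaka

variable (k : Type) [Field k] (A : Type) [SmallCategory A] [DecidableEq A]
  [Preadditive A] [CategoryTheory.Linear k A]
variable (ω : A ⥤ ModuleCat k) [ω.Additive] [Functor.Linear k ω]

theorem HH0_coalgebra_structure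
    [∀ X : A, FiniteDimensional k (ω.obj X)] :
    ∃ (ε : HH0 k A ω →ₗ[k] k) (Δ : HH0 k A ω →ₗ[k] (HH0 k A ω ⊗[k] HH0 k A ω)),
      -- ε is well defined on the quotient and is given by evaluation
      (∀ (X : A) (φ : Module.Dual k (ω.obj X)) (v : ω.obj X),
        ε (cls k A ω X φ v) = φ v) ∧
      -- Δ is well defined on the quotient, and is given by the stated formula
      -- for ANY choice of basis (in particular it is independent of this choice)
      (∀ (X : A) (ι : Type) [Fintype ι] (b : Module.Basis ι k (ω.obj X))
          (φ : Module.Dual k (ω.obj X)) (v : ω.obj X),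
        Δ (cls k A ω X φ v) =
          ∑ i : ι, (cls k A ω X φ (b i)) ⊗ₜ[k] (cls k A ω X (b.coord i) v)) ∧
      -- coassociativity
      ((TensorProduct.assoc k _ _ _).toLinearMap ∘ₗ
          (TensorProduct.map Δ LinearMap.id) ∘ₗ Δ =
        (TensorProduct.map LinearMap.id Δ) ∘ₗ Δ) ∧
      -- counit laws
      ((TensorProduct.lid k (HH0 k A ω)).toLinearMap ∘ₗ
          (TensorProduct.map ε LinearMap.id) ∘ₗ Δ = LinearMap.id) ∧
      ((TensorProduct.rid k (HH0 k A ω)).toLinearMap ∘ₗ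
          (TensorProduct.map LinearMap.id ε) ∘ₗ Δ = LinearMap.id) :=
  ⟨counit k A ω, comul k A ω, counit_cls k A ω, fun X _ _ b => comul_cls k A ω X b,
    comul_coassoc k A ω, lid_counit_comul k A ω, rid_counit_comul k A ω⟩

end Tannaka
end
end

section
/- For each object X of 𝒜 define ρ_X : ω(X) → ω(X) ⊗_k C by ρ_X(v) = Σ_i e_i ⊗ [e_i^∨ ⊗ v], where (e_i) is a basis of ω(X) with dual basis (e_i^∨). Then: (i) ρ_X does not depend on the choice of basis; (ii) (id_{ω(X)} ⊗ ε)∘ρ_X = id_{ω(X)} (under the canonical isomorphism ω(X)⊗_k k ≅ ω(X)); (iii) (ρ_X ⊗ id_C)∘ρ_X = (id_{ω(X)} ⊗ Δ)∘ρ_X; and (iv) for every morphism f : X → Y of 𝒜, ρ_Y∘ω(f) = (ω(f) ⊗ id_C)∘ρ_X. Thus ω lifts to a functor from 𝒜 to right C-comodules. -/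
/-!
STATEMENT 9: For each object `X` of `𝒜` define `ρ_X : ω(X) → ω(X) ⊗ C` by
`ρ_X(v) = Σᵢ eᵢ ⊗ [eᵢ^∨ ⊗ v]` for a basis `(eᵢ)` of `ω(X)`.  Then (i) `ρ_X` does
not depend on the choice of basis; (ii) `(id ⊗ ε)∘ρ_X = id`; (iii)
`(ρ_X ⊗ id)∘ρ_X = (id ⊗ Δ)∘ρ_X`; (iv) `ρ_Y∘ω(f) = (ω(f) ⊗ id)∘ρ_X` for every
morphism `f : X ⟶ Y`.  Thus `ω` lifts to a functor to right `C`-comodules.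
Here `C = HH₀(𝒜, ω^∨ ⊗ ω)` with its coalgebra structure `Δ, ε`.
-/

open CategoryTheory TensorProduct

noncomputable section

namespace Tannaka

variable (k : Type) [Field k] (A : Type) [SmallCategory A] [DecidableEq A]
  [Preadditive A] [CategoryTheory.Linear k A]
variable (ω : A ⥤ ModuleCat k) [ω.Additive] [Functor.Linear k ω]

/-!
For any pairing `β : V^∨ × V → C` and basis `b` of `V`, the map `v ↦ ∑ i, bᵢ ⊗ β(bᵢ^∨, v)` is
coassociative and counital as soon as `Δ` and `ε` are given on the image of `β` by the formulas
defining them on `HH₀`. Basis independence and naturality both come from the fact that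
`∑ i, g(bᵢ) ⊗ bᵢ^∨ ∈ W ⊗ V^∨` is the tensor of `g : V → W`, whichever bases are used; for
naturality this is combined with the defining relation `[φ ⊗ ω(f)v] = [(φ ∘ ω(f)) ⊗ v]` of `HH₀`.
-/

section CoactionOfBasis

open Module

variable {R V W C : Type*} [CommRing R] [AddCommMonoid V] [Module R V] [AddCommMonoid W]
  [Module R W] [AddCommMonoid C] [Module R C] {ι κ : Type*} [Fintype ι] [Fintype κ]

/-- Both sides are the tensor corresponding to `g` under `W ⊗ V^∨ ≅ Hom(V, W)`. -/
theorem _root_.Module.Basis.sum_apply_tmul_coord_eq (b : Basis ι R V) (c : Basis κ R W)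
    (g : V →ₗ[R] W) :
    ∑ i, g (b i) ⊗ₜ[R] b.coord i = ∑ j, c j ⊗ₜ[R] (c.coord j ∘ₗ g) := by
  conv_rhs => enter [2, j]; rw [← b.sum_dual_apply_smul_coord (c.coord j ∘ₗ g)]
  simp_rw [tmul_sum, tmul_smul, smul_tmul']
  rw [Finset.sum_comm]
  simp_rw [← sum_tmul, LinearMap.comp_apply, Basis.coord_apply, c.sum_repr]

def _root_.Module.Basis.coaction (b : Basis ι R V) (β : Dual R V →ₗ[R] V →ₗ[R] C) :
    V →ₗ[R] V ⊗[R] C :=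
  ∑ i, TensorProduct.mk R V C (b i) ∘ₗ β (b.coord i)

variable (b : Basis ι R V) (β : Dual R V →ₗ[R] V →ₗ[R] C)

theorem _root_.Module.Basis.coaction_apply (v : V) :
    b.coaction β v = ∑ i, b i ⊗ₜ[R] β (b.coord i) v := by
  simp [Basis.coaction, LinearMap.sum_apply]

theorem _root_.Module.Basis.coaction_comp {βW : Dual R W →ₗ[R] W →ₗ[R] C} (c : Basis κ R W)
    (g : V →ₗ[R] W) (hg : ∀ φ v, βW φ (g v) = β (φ ∘ₗ g) v) :
    c.coaction βW ∘ₗ g = TensorProduct.map g LinearMap.id ∘ₗ b.coaction β := by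
  ext v
  have h := congrArg (TensorProduct.map LinearMap.id (β.flip v)) (b.sum_apply_tmul_coord_eq c g)
  simp only [map_sum, TensorProduct.map_tmul, LinearMap.id_apply, LinearMap.flip_apply] at h
  simp [Basis.coaction_apply, hg, h]

theorem _root_.Module.Basis.coaction_eq_coaction (c : Basis κ R V) :
    c.coaction β = b.coaction β := by
  simpa only [LinearMap.comp_id, TensorProduct.map_id, LinearMap.id_comp] using
    b.coaction_comp β c LinearMap.id fun _ _ => rfl

theorem _root_.Module.Basis.rid_comp_map_comp_coaction (ε : C →ₗ[R] R)
    (hε : ∀ φ v, ε (β φ v) = φ v) :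
    (TensorProduct.rid R V).toLinearMap ∘ₗ TensorProduct.map LinearMap.id ε ∘ₗ b.coaction β =
      LinearMap.id := by
  ext v
  simp [Basis.coaction_apply, hε, b.sum_repr]

theorem _root_.Module.Basis.assoc_comp_map_coaction_comp_coaction (Δ : C →ₗ[R] C ⊗[R] C)
    (hΔ : ∀ φ v, Δ (β φ v) = ∑ i, β φ (b i) ⊗ₜ[R] β (b.coord i) v) :
    (TensorProduct.assoc R V C C).toLinearMap ∘ₗ
        TensorProduct.map (b.coaction β) LinearMap.id ∘ₗ b.coaction β =
      TensorProduct.map LinearMap.id Δ ∘ₗ b.coaction β := by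
  ext v
  simp only [LinearMap.comp_apply, Basis.coaction_apply, map_sum, TensorProduct.map_tmul,
    LinearMap.id_apply, LinearEquiv.coe_coe, hΔ, sum_tmul, tmul_sum, assoc_tmul]
  exact Finset.sum_comm

end CoactionOfBasis

variable {k A}

def clsBilin (X : A) : Module.Dual k (ω.obj X) →ₗ[k] ω.obj X →ₗ[k] HH0 k A ω :=
  (TensorProduct.mk k _ _).compr₂
    ((HH0rel k A ω).mkQ ∘ₗ DirectSum.lof k A (fun X => Module.Dual k (ω.obj X) ⊗[k] ω.obj X) X)

omit [Preadditive A] [Linear k A] [ω.Additive] [Functor.Linear k ω] in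
theorem clsBilin_apply (X : A) (φ : Module.Dual k (ω.obj X)) (v : ω.obj X) :
    clsBilin ω X φ v = cls k A ω X φ v := rfl

omit [Preadditive A] [Linear k A] [ω.Additive] [Functor.Linear k ω] in
theorem cls_map_apply {X Y : A} (f : X ⟶ Y) (φ : Module.Dual k (ω.obj Y)) (v : ω.obj X) :
    cls k A ω Y φ (ω.map f v) = cls k A ω X (φ ∘ₗ (ω.map f).hom) v := by
  rw [cls, cls, eq_comm, Submodule.Quotient.eq]
  exact Submodule.subset_span ⟨X, Y, f, φ, v, rfl⟩

variable (k A)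

theorem coaction_on_fibre_functor
    [∀ X : A, FiniteDimensional k (ω.obj X)]
    -- ε and Δ are the coalgebra structure maps of `C`, characterised by their
    -- values on classes of pure tensors:
    (ε : HH0 k A ω →ₗ[k] k)
    (hε : ∀ (X : A) (φ : Module.Dual k (ω.obj X)) (v : ω.obj X),
      ε (cls k A ω X φ v) = φ v)
    (Δ : HH0 k A ω →ₗ[k] (HH0 k A ω ⊗[k] HH0 k A ω))
    (hΔ : ∀ (X : A) (ι : Type) [Fintype ι] (b : Module.Basis ι k (ω.obj X))
        (φ : Module.Dual k (ω.obj X)) (v : ω.obj X),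
      Δ (cls k A ω X φ v) =
        ∑ i : ι, (cls k A ω X φ (b i)) ⊗ₜ[k] (cls k A ω X (b.coord i) v)) :
    ∃ ρ : ∀ X : A, (ω.obj X →ₗ[k] (ω.obj X ⊗[k] HH0 k A ω)),
      -- (i) ρ_X is given by the stated formula for ANY basis, hence is
      -- independent of the choice of basis
      (∀ (X : A) (ι : Type) [Fintype ι] (b : Module.Basis ι k (ω.obj X)) (v : ω.obj X),
        ρ X v = ∑ i : ι, (b i) ⊗ₜ[k] (cls k A ω X (b.coord i) v)) ∧
      -- (ii) counitality
      (∀ X : A,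
        (TensorProduct.rid k (ω.obj X)).toLinearMap ∘ₗ
          (TensorProduct.map LinearMap.id ε) ∘ₗ ρ X = LinearMap.id) ∧
      -- (iii) coassociativity of the coaction
      (∀ X : A,
        (TensorProduct.assoc k _ _ _).toLinearMap ∘ₗ
            (TensorProduct.map (ρ X) LinearMap.id) ∘ₗ ρ X =
          (TensorProduct.map LinearMap.id Δ) ∘ₗ ρ X) ∧
      -- (iv) naturality: ω lifts to a functor to right C-comodules
      (∀ (X Y : A) (f : X ⟶ Y),
        ρ Y ∘ₗ ((ω.map f).hom : ω.obj X →ₗ[k] ω.obj Y) =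
          (TensorProduct.map (ω.map f).hom LinearMap.id) ∘ₗ ρ X) := by
  refine ⟨fun X => (Module.finBasis k (ω.obj X)).coaction (clsBilin ω X), ?_, ?_, ?_, ?_⟩
  · exact fun X ι _ b v =>
      (LinearMap.congr_fun (b.coaction_eq_coaction _ _) v).trans (b.coaction_apply _ v)
  · exact fun X => Module.Basis.rid_comp_map_comp_coaction _ _ ε (hε X)
  · exact fun X => Module.Basis.assoc_comp_map_coaction_comp_coaction _ _ Δ (hΔ X _ _)
  · exact fun X Y f => Module.Basis.coaction_comp _ _ _ _ (cls_map_apply ω f)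

end Tannaka
end
end
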